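/- arXiv:math/0401080 — 3 statements merged into one kernel-verified Lean document; each statement's English description precedes it below -/
import Mathlib

section
/- There is no positive function c(β) on (0,∞) such that μ_β = c(β) μ₁ for all β; i.e., the cone metrics μ_β on the sphere, all having the same cone points and cone angles, are not all scalar multiples of one another. -/
/-!
The densities of `μ_β` and `μ₁` differ by the factor `|e^{(β-1)z}| = e^{(β-1) Re z}`, which for
`β ≠ 1` is not constant in `z`: at `β = 2` it is `1` at `z = 0` but `e³` at `z = 3`, and the
common factor `((z+1)/(z-1))((z+2)/(z-2))` vanishes at neither point.
-/

open Complex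

theorem norm_mul_cexp_ofReal_mul (w z : ℂ) (β : ℝ) :
    ‖w * cexp (β * z)‖ = Real.exp ((β - 1) * z.re) * ‖w * cexp (1 * z)‖ := by
  simp only [norm_mul, norm_exp, one_mul, re_ofReal_mul]
  rw [mul_left_comm, ← Real.exp_add]
  ring_nf

theorem eq_exp_of_norm_mul_cexp_eq {w z : ℂ} {β c : ℝ} (hw : w ≠ 0)
    (h : ‖w * cexp (β * z)‖ = c * ‖w * cexp (1 * z)‖) :
    c = Real.exp ((β - 1) * z.re) := by
  rw [norm_mul_cexp_ofReal_mul] at h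
  have hpos : ‖w * cexp (1 * z)‖ ≠ 0 := by simp [hw]
  exact (mul_right_cancel₀ hpos h).symm

/-- There is no positive function `c(β)` on `(0, ∞)` such that
`μ_β = c(β) μ₁` for all `β > 0`, where
`μ_β = |((z+1)/(z-1))((z+2)/(z-2)) e^{βz} dz|`: the cone metrics `μ_β` on the sphere,
all having the same cone points and cone angles, are not all scalar multiples of one
another. -/
theorem stmt_7 :
    ¬ ∃ c : ℝ → ℝ, (∀ β : ℝ, 0 < β → 0 < c β) ∧
      ∀ β : ℝ, 0 < β → ∀ z : ℂ, z ≠ 1 → z ≠ -1 → z ≠ 2 → z ≠ -2 →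
        ‖(z + 1) / (z - 1) * ((z + 2) / (z - 2)) * Complex.exp ((β : ℂ) * z)‖ =
          c β * ‖(z + 1) / (z - 1) * ((z + 2) / (z - 2)) * Complex.exp ((1 : ℂ) * z)‖ := by
  rintro ⟨c, -, h⟩
  have at_zero := eq_exp_of_norm_mul_cexp_eq (by norm_num)
    (h 2 two_pos 0 (by norm_num) (by norm_num) (by norm_num) (by norm_num))
  have at_three := eq_exp_of_norm_mul_cexp_eq (by norm_num)
    (h 2 two_pos 3 (by norm_num) (by norm_num) (by norm_num) (by norm_num))
  norm_num at at_zero at_three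
  rw [at_zero, eq_comm, Real.exp_eq_one_iff] at at_three
  norm_num at at_three
end

section
/- Let 0 < ε₂ < ε₁ with k(ε₁ − ε₂) < 10 for some k > 0, and suppose d = ∫_0^{ε₂} (x/(x−ε₁))² ((x−ε₂)/(x−ε₁))^{k−1} dx. Then d > (ε₂²/4) ∫_{ε₂/2}^{ε₂} (x−ε₁)^{−2} (1 + (ε₁−ε₂)/(x−ε₁))^{k−1} dx = (ε₂²/(4k(ε₁−ε₂))) (1 − 2(ε₁−ε₂)/(2ε₁−ε₂))^k. -/
open MeasureTheory intervalIntegral Set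

lemma aux_intg {a b k : ℝ} (hk : (-1:ℝ) < k - 1) {φ : ℝ → ℝ} (hφ : ContinuousOn φ (Set.uIcc a b)) :
    IntervalIntegrable (fun x => φ x * (b - x) ^ (k - 1)) volume a b := by
  have base : IntervalIntegrable (fun x => (b - x) ^ (k - 1)) volume a b := by
    have := (intervalIntegrable_rpow' hk (a := b - a) (b := 0)).comp_sub_left b
    simpa using this
  exact base.continuousOn_mul hφ

lemma aux_congr {f g : ℝ → ℝ} {a b : ℝ} (hab : a ≤ b)
    (h : IntervalIntegrable f volume a b) (he : ∀ x ∈ Set.Ioc a b, f x = g x) :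
    IntervalIntegrable g volume a b := by
  rw [intervalIntegrable_iff] at h ⊢
  rw [Set.uIoc_of_le hab] at h ⊢
  exact h.congr_fun he measurableSet_Ioc

lemma aux_base (ε₁ ε₂ x : ℝ) (hx : x < ε₁) :
    1 + (ε₁ - ε₂) / (x - ε₁) = (ε₂ - x) / (ε₁ - x) := by
  have h1 : x - ε₁ ≠ 0 := by intro h; rw [sub_eq_zero] at h; linarith
  have h2 : ε₁ - x ≠ 0 := by intro h; rw [sub_eq_zero] at h; linarith
  field_simp
  ring

lemma aux_psi_cont (ε₁ ε₂ k a : ℝ) (h12 : ε₂ < ε₁) (hab : a ≤ ε₂) {ψ : ℝ → ℝ}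
    (hψ : ContinuousOn ψ (Set.Icc a ε₂)) :
    ContinuousOn (fun x => ψ x * ((ε₁ - x) ^ (k - 1))⁻¹) (Set.uIcc a ε₂) := by
  rw [Set.uIcc_of_le hab]
  intro x hx
  have hx1 : x < ε₁ := lt_of_le_of_lt hx.2 h12
  have h2 : (ε₁ - x) ^ (k - 1) ≠ 0 := (Real.rpow_pos_of_pos (by linarith) _).ne'
  apply ContinuousWithinAt.mul (hψ x hx)
  refine ContinuousWithinAt.inv₀ ?_ h2
  exact ((Real.continuousAt_rpow_const _ _
    (Or.inl (by intro h; simp [sub_eq_zero] at h; linarith))).comp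
    ((continuous_const.sub continuous_id).continuousAt)).continuousWithinAt

lemma aux_gint (ε₁ ε₂ k : ℝ) (h0 : 0 < ε₂) (h12 : ε₂ < ε₁) (hk : 0 < k) :
    IntervalIntegrable
      (fun x => (1 / (x - ε₁) ^ 2) * (1 + (ε₁ - ε₂) / (x - ε₁)) ^ (k - 1))
      volume (ε₂/2) ε₂ := by
  have hab : ε₂/2 ≤ ε₂ := by linarith
  have hψ : ContinuousOn (fun x => 1 / (x - ε₁) ^ 2) (Set.Icc (ε₂/2) ε₂) := by
    intro x hx
    have hx1 : x < ε₁ := lt_of_le_of_lt hx.2 h12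
    have h1 : (x - ε₁) ^ 2 ≠ 0 := pow_ne_zero _ (by intro h; rw [sub_eq_zero] at h; linarith)
    exact continuousWithinAt_const.div
      (((continuous_id.sub continuous_const).pow 2).continuousWithinAt) h1
  refine aux_congr hab (aux_intg (by linarith)
    (aux_psi_cont ε₁ ε₂ k (ε₂/2) h12 hab hψ)) ?_
  intro x hx
  obtain ⟨hxa, hxb⟩ := hx
  have hx1 : x < ε₁ := lt_of_le_of_lt hxb h12
  rw [aux_base ε₁ ε₂ x hx1,
    Real.div_rpow (by linarith : (0:ℝ) ≤ ε₂ - x) (by linarith : (0:ℝ) ≤ ε₁ - x)]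
  field_simp

lemma aux_ftc (ε₁ ε₂ k : ℝ) (h0 : 0 < ε₂) (h12 : ε₂ < ε₁) (hk : 0 < k) :
    (∫ x in (ε₂/2)..ε₂, (1 / (x - ε₁) ^ 2) * (1 + (ε₁ - ε₂) / (x - ε₁)) ^ (k - 1))
      = 1 / ((ε₁ - ε₂) * k) * (ε₂ / (2*ε₁ - ε₂)) ^ k := by
  have hab : ε₂/2 ≤ ε₂ := by linarith
  have hc : (0:ℝ) < ε₁ - ε₂ := by linarith
  set F : ℝ → ℝ := fun x => -(1/((ε₁ - ε₂)*k)) * (1 + (ε₁ - ε₂)/(x - ε₁)) ^ k with hF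
  have hcont : ContinuousOn F (Set.Icc (ε₂/2) ε₂) := by
    apply ContinuousOn.mul continuousOn_const
    apply ContinuousOn.rpow_const
    · exact continuousOn_const.add (continuousOn_const.div
        ((continuous_id.sub continuous_const).continuousOn) (fun y hy => by
          have := lt_of_le_of_lt hy.2 h12
          intro h; rw [sub_eq_zero] at h; linarith))
    · intro x _; exact Or.inr hk.le
  have hderiv : ∀ x ∈ Set.Ioo (ε₂/2) ε₂, HasDerivWithinAt F
      ((1 / (x - ε₁) ^ 2) * (1 + (ε₁ - ε₂) / (x - ε₁)) ^ (k - 1)) (Set.Ioi x) x := by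
    intro x hx
    have hx1 : x < ε₁ := lt_trans hx.2 h12
    have hne : x - ε₁ ≠ 0 := by intro h; rw [sub_eq_zero] at h; linarith
    have hbpos : 0 < 1 + (ε₁ - ε₂)/(x - ε₁) := by
      rw [aux_base ε₁ ε₂ x hx1]
      exact div_pos (by linarith [hx.2]) (by linarith)
    have hb : HasDerivAt (fun x => 1 + (ε₁ - ε₂)/(x - ε₁))
        (-(ε₁ - ε₂) / (x - ε₁) ^ 2) x := by
      have h1 : HasDerivAt (fun x : ℝ => (x - ε₁)) 1 x := (hasDerivAt_id x).sub_const ε₁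
      have h2 := ((h1.inv hne).const_mul (ε₁ - ε₂)).const_add 1
      exact (h2.congr_deriv (by ring)).congr_of_eventuallyEq
        (Filter.Eventually.of_forall fun y => by simp [div_eq_mul_inv])
    have h3 := (hb.rpow_const (p := k) (Or.inl hbpos.ne')).const_mul (-(1/((ε₁ - ε₂)*k)))
    have heq : -(1/((ε₁ - ε₂)*k)) * (-(ε₁ - ε₂) / (x - ε₁) ^ 2 * k *
        (1 + (ε₁ - ε₂)/(x - ε₁)) ^ (k-1))
        = (1 / (x - ε₁) ^ 2) * (1 + (ε₁ - ε₂) / (x - ε₁)) ^ (k - 1) := by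
      field_simp
    rw [heq] at h3
    exact h3.hasDerivWithinAt
  have hint := aux_gint ε₁ ε₂ k h0 h12 hk
  have key := intervalIntegral.integral_eq_sub_of_hasDeriv_right_of_le hab hcont hderiv hint
  rw [key]
  simp only [hF]
  have e1 : (1:ℝ) + (ε₁ - ε₂)/(ε₂ - ε₁) = 0 := by
    have : ε₂ - ε₁ ≠ 0 := by intro h; rw [sub_eq_zero] at h; linarith
    field_simp
    ring
  have e2 : (1:ℝ) + (ε₁ - ε₂)/(ε₂/2 - ε₁) = ε₂ / (2*ε₁ - ε₂) := by
    rw [aux_base ε₁ ε₂ (ε₂/2) (by linarith)]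
    rw [div_eq_div_iff (by linarith) (by linarith)]
    ring
  rw [e1, e2, Real.zero_rpow hk.ne']
  ring

lemma aux_flip (a b x : ℝ) : (x - a)/(x - b) = (a - x)/(b - x) := by
  rw [← neg_sub a x, ← neg_sub b x, neg_div_neg_eq]

lemma aux_hint2 (ε₁ ε₂ k : ℝ) (h0 : 0 < ε₂) (h12 : ε₂ < ε₁) (hk : 0 < k) :
    IntervalIntegrable
      (fun x => (x / (x - ε₁)) ^ 2 * ((x - ε₂) / (x - ε₁)) ^ (k - 1))
      volume (ε₂/2) ε₂ := by
  have hab : ε₂/2 ≤ ε₂ := by linarith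
  have hψ : ContinuousOn (fun x => (x / (x - ε₁)) ^ 2) (Set.Icc (ε₂/2) ε₂) := by
    intro x hx
    have hx1 : x < ε₁ := lt_of_le_of_lt hx.2 h12
    have h1 : x - ε₁ ≠ 0 := by intro h; rw [sub_eq_zero] at h; linarith
    exact ((continuousWithinAt_id.div
      ((continuous_id.sub continuous_const).continuousWithinAt) h1).pow 2)
  refine aux_congr hab (aux_intg (by linarith)
    (aux_psi_cont ε₁ ε₂ k (ε₂/2) h12 hab hψ)) ?_
  intro x hx
  obtain ⟨hxa, hxb⟩ := hx
  have hx1 : x < ε₁ := lt_of_le_of_lt hxb h12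
  rw [aux_flip ε₂ ε₁ x,
    Real.div_rpow (by linarith : (0:ℝ) ≤ ε₂ - x) (by linarith : (0:ℝ) ≤ ε₁ - x)]
  field_simp

lemma aux_hint1 (ε₁ ε₂ k : ℝ) (h0 : 0 < ε₂) (h12 : ε₂ < ε₁) (hk : 0 < k) :
    IntervalIntegrable
      (fun x => (x / (x - ε₁)) ^ 2 * ((x - ε₂) / (x - ε₁)) ^ (k - 1))
      volume 0 (ε₂/2) := by
  apply ContinuousOn.intervalIntegrable
  rw [Set.uIcc_of_le (by linarith)]
  intro x hx
  have hx1 : x < ε₁ := lt_of_le_of_lt hx.2 (by linarith)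
  have h1 : x - ε₁ ≠ 0 := by intro h; rw [sub_eq_zero] at h; linarith
  have hbne : (x - ε₂)/(x - ε₁) ≠ 0 := by
    rw [aux_flip]
    exact (div_pos (by linarith [hx.2]) (by linarith)).ne'
  apply ContinuousWithinAt.mul
  · exact ((continuousWithinAt_id.div
      ((continuous_id.sub continuous_const).continuousWithinAt) h1).pow 2)
  · refine ContinuousWithinAt.rpow_const ?_ (Or.inl hbne)
    exact ContinuousWithinAt.div
      ((continuous_id.sub continuous_const).continuousWithinAt)
      ((continuous_id.sub continuous_const).continuousWithinAt) h1

/-- Let `0 < ε₂ < ε₁` with `k(ε₁ - ε₂) < 10` for some `k > 0`, and suppose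
`d = ∫_0^{ε₂} (x/(x-ε₁))² ((x-ε₂)/(x-ε₁))^{k-1} dx`. Then
`d > (ε₂²/4) ∫_{ε₂/2}^{ε₂} (x-ε₁)^{-2} (1 + (ε₁-ε₂)/(x-ε₁))^{k-1} dx
   = (ε₂²/(4k(ε₁-ε₂))) (1 - 2(ε₁-ε₂)/(2ε₁-ε₂))^k`. -/
theorem stmt_15 (ε₁ ε₂ k d : ℝ)
    (h0 : 0 < ε₂) (h12 : ε₂ < ε₁) (hk : 0 < k)
    (h10 : k * (ε₁ - ε₂) < 10)
    (hd : d = ∫ x in (0 : ℝ)..ε₂,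
      (x / (x - ε₁)) ^ 2 * ((x - ε₂) / (x - ε₁)) ^ (k - 1)) :
    d > ε₂ ^ 2 / 4 * ∫ x in (ε₂ / 2)..ε₂,
        (1 / (x - ε₁) ^ 2) * (1 + (ε₁ - ε₂) / (x - ε₁)) ^ (k - 1) ∧
    ε₂ ^ 2 / 4 * (∫ x in (ε₂ / 2)..ε₂,
        (1 / (x - ε₁) ^ 2) * (1 + (ε₁ - ε₂) / (x - ε₁)) ^ (k - 1)) =
      ε₂ ^ 2 / (4 * k * (ε₁ - ε₂)) * (1 - 2 * (ε₁ - ε₂) / (2 * ε₁ - ε₂)) ^ k := by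
  have hc : (0:ℝ) < ε₁ - ε₂ := by linarith
  have hgint := aux_gint ε₁ ε₂ k h0 h12 hk
  have hhint2 := aux_hint2 ε₁ ε₂ k h0 h12 hk
  have hhint1 := aux_hint1 ε₁ ε₂ k h0 h12 hk
  constructor
  · -- strict inequality
    have hsplit : d = (∫ x in (0:ℝ)..(ε₂/2),
        (x / (x - ε₁)) ^ 2 * ((x - ε₂) / (x - ε₁)) ^ (k - 1))
        + ∫ x in (ε₂/2)..ε₂,
        (x / (x - ε₁)) ^ 2 * ((x - ε₂) / (x - ε₁)) ^ (k - 1) := by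
      rw [hd, intervalIntegral.integral_add_adjacent_intervals hhint1 hhint2]
    have h1 : 0 ≤ ∫ x in (0:ℝ)..(ε₂/2),
        (x / (x - ε₁)) ^ 2 * ((x - ε₂) / (x - ε₁)) ^ (k - 1) := by
      apply intervalIntegral.integral_nonneg (by linarith)
      intro u hu
      have hu1 : u < ε₁ := lt_of_le_of_lt hu.2 (by linarith)
      apply mul_nonneg (sq_nonneg _)
      apply Real.rpow_nonneg
      rw [aux_flip]
      exact div_nonneg (by linarith [hu.2]) (by linarith)
    have hdiff : 0 < ∫ x in (ε₂/2)..ε₂,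
        ((x / (x - ε₁)) ^ 2 * ((x - ε₂) / (x - ε₁)) ^ (k - 1)
          - ε₂ ^ 2 / 4 * ((1 / (x - ε₁) ^ 2) * (1 + (ε₁ - ε₂) / (x - ε₁)) ^ (k - 1))) := by
      apply intervalIntegral.intervalIntegral_pos_of_pos_on
        (hhint2.sub (hgint.const_mul _)) _ (by linarith)
      intro x hx
      have hx1 : x < ε₁ := lt_trans hx.2 h12
      have hne : x - ε₁ ≠ 0 := by intro h; rw [sub_eq_zero] at h; linarith
      have hB : 0 < ((ε₂ - x)/(ε₁ - x)) ^ (k - 1) :=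
        Real.rpow_pos_of_pos (div_pos (by linarith [hx.2]) (by linarith)) _
      rw [aux_base ε₁ ε₂ x hx1, aux_flip ε₂ ε₁ x]
      have hfac : (x / (x - ε₁)) ^ 2 * ((ε₂ - x)/(ε₁ - x)) ^ (k - 1)
          - ε₂ ^ 2 / 4 * ((1 / (x - ε₁) ^ 2) * ((ε₂ - x)/(ε₁ - x)) ^ (k - 1))
          = ((x ^ 2 - ε₂ ^ 2 / 4) / (x - ε₁) ^ 2) * ((ε₂ - x)/(ε₁ - x)) ^ (k - 1) := by
        field_simp
      rw [hfac]
      apply mul_pos _ hB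
      apply div_pos
      · nlinarith [hx.1, hx.2, h0]
      · nlinarith [hne, sq_nonneg (x - ε₁)]
    rw [intervalIntegral.integral_sub hhint2 (hgint.const_mul _),
      intervalIntegral.integral_const_mul] at hdiff
    rw [hsplit]
    linarith
  · -- equality
    rw [aux_ftc ε₁ ε₂ k h0 h12 hk]
    have hne2 : (2 * ε₁ - ε₂) ≠ 0 := by intro h; linarith
    have hbase : (1 - 2 * (ε₁ - ε₂) / (2 * ε₁ - ε₂)) = ε₂ / (2 * ε₁ - ε₂) := by
      field_simp
      ring
    rw [hbase, ← mul_assoc]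
    congr 1
    field_simp
end

section
/- Two flat cone metrics on a compact Riemann surface with the same finite cone points and the same (finite) cone angles differ by a constant positive scalar factor. -/
open scoped Manifold

variable {M : Type*} [TopologicalSpace M] [ChartedSpace ℂ M]

/-- A family `ρ`, assigning to each point `x` of a Riemann surface the density of a
conformal metric in the coordinates of the chart at `x`, is compatible if on chart
overlaps the densities transform by the modulus of the derivative of the transition map. -/
def MetricCompat (ρ : M → ℂ → ℝ) : Prop :=
  ∀ x y m : M, m ∈ (chartAt ℂ x).source → m ∈ (chartAt ℂ y).source →
    ρ x (chartAt ℂ x m) =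
      ρ y (chartAt ℂ y m) *
        ‖deriv (fun w => chartAt ℂ y ((chartAt ℂ x).symm w)) (chartAt ℂ x m)‖

/-- The metric with density family `ρ` is flat away from the set `P`: near every
point not in `P` it is, in the chart coordinates, of the form `|f(z)||dz|` with `f`
holomorphic and nonvanishing (so `log |f|` is harmonic and the Gauss curvature vanishes). -/
def FlatAwayFrom (ρ : M → ℂ → ℝ) (P : Set M) : Prop :=
  ∀ x : M, x ∉ P → ∃ r > 0, Metric.ball (chartAt ℂ x x) r ⊆ (chartAt ℂ x).target ∧
    ∃ f : ℂ → ℂ, DifferentiableOn ℂ f (Metric.ball (chartAt ℂ x x) r) ∧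
      ∀ z ∈ Metric.ball (chartAt ℂ x x) r, f z ≠ 0 ∧ ρ x z = ‖f z‖

/-- The metric with density family `ρ` has a (finite) cone point of cone angle `2πa`
at `p`: in a suitable holomorphic local coordinate `w` centered at `p`, the metric is
`|w^(a-1) dw|`, i.e. it is isometric to a neighborhood of the vertex of the cone `C_a`. -/
def FiniteConeAt (ρ : M → ℂ → ℝ) (p : M) (a : ℝ) : Prop :=
  ∃ r > 0, Metric.ball (chartAt ℂ p p) r ⊆ (chartAt ℂ p).target ∧
    ∃ w : ℂ → ℂ, DifferentiableOn ℂ w (Metric.ball (chartAt ℂ p p) r) ∧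
      Set.InjOn w (Metric.ball (chartAt ℂ p p) r) ∧
      w (chartAt ℂ p p) = 0 ∧
      ∀ z ∈ Metric.ball (chartAt ℂ p p) r, z ≠ chartAt ℂ p p →
        ρ p z = ‖w z‖ ^ (a - 1) * ‖deriv w z‖

/-- The metric with density family `ρ` has an exponential cone point of simple type
at `p`: in a suitable holomorphic local coordinate `w` centered at `p`, the metric is
`|e^(1/w) dw / w²|`. -/
def ExpConeAt (ρ : M → ℂ → ℝ) (p : M) : Prop :=
  ∃ r > 0, Metric.ball (chartAt ℂ p p) r ⊆ (chartAt ℂ p).target ∧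
    ∃ w : ℂ → ℂ, DifferentiableOn ℂ w (Metric.ball (chartAt ℂ p p) r) ∧
      Set.InjOn w (Metric.ball (chartAt ℂ p p) r) ∧
      w (chartAt ℂ p p) = 0 ∧
      ∀ z ∈ Metric.ball (chartAt ℂ p p) r, z ≠ chartAt ℂ p p →
        ρ p z = ‖Complex.exp (1 / w z)‖ * ‖deriv w z‖ / ‖w z‖ ^ 2

/-- A global holomorphic one-form on a Riemann surface, given by its coefficient
functions in the charts, holomorphic and transforming by the derivative of the
transition maps. -/
def IsHoloOneForm (M : Type*) [TopologicalSpace M] [ChartedSpace ℂ M]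
    (η : M → ℂ → ℂ) : Prop :=
  (∀ x : M, DifferentiableOn ℂ (η x) (chartAt ℂ x).target) ∧
  ∀ x y m : M, m ∈ (chartAt ℂ x).source → m ∈ (chartAt ℂ y).source →
    η x (chartAt ℂ x m) =
      η y (chartAt ℂ y m) *
        deriv (fun w => chartAt ℂ y ((chartAt ℂ x).symm w)) (chartAt ℂ x m)

/-- A compact Riemann surface has genus `g` iff the space of global holomorphic
one-forms has complex dimension `g`. -/
def HasGenus (M : Type*) [TopologicalSpace M] [ChartedSpace ℂ M] (g : ℕ) : Prop :=
  ∃ V : Submodule ℂ (M → ℂ → ℂ),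
    (V : Set (M → ℂ → ℂ)) = {η | IsHoloOneForm M η} ∧ Module.finrank ℂ V = g

/-!
The ratio `u = ρ₂ / ρ₁` of the two densities does not depend on the chart. Away from the cone
points it is locally `|f₂ / f₁|`. At a cone point the coordinates `wᵢ` are injective, hence have
nonvanishing derivative, so `wᵢ = (z - z₀) φᵢ` with `φᵢ (z₀) ≠ 0`, and `u` is
`|φ₂ / φ₁| ^ (a - 1) |w₂' / w₁'|`. Thus `u` is everywhere locally the modulus of a holomorphic
function and extends across the cone points. At a maximum of the extension on the compact
surface the maximum modulus principle makes it locally constant, and since the surface is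
connected the extension is constant.
-/

open Complex Filter Set Topology

section

variable {q : ℂ → ℂ} {z₀ : ℂ}

theorem AnalyticAt.exists_exp_eq (hq : AnalyticAt ℂ q z₀) (hq₀ : q z₀ ≠ 0) :
    ∃ L : ℂ → ℂ, AnalyticAt ℂ L z₀ ∧ ∀ᶠ z in 𝓝 z₀, exp (L z) = q z := by
  refine ⟨fun z => Complex.log (q z₀) + Complex.log (q z / q z₀), analyticAt_const.add ?_, ?_⟩
  · exact (analyticAt_clog (by simp [hq₀])).comp (hq.div analyticAt_const hq₀)
  · filter_upwards [hq.continuousAt.eventually_ne hq₀] with z hz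
    rw [exp_add, exp_log hq₀, exp_log (div_ne_zero hz hq₀), mul_div_cancel₀ _ hq₀]

theorem AnalyticAt.exists_pow_eq (hq : AnalyticAt ℂ q z₀) (hq₀ : q z₀ ≠ 0) {n : ℕ} (hn : n ≠ 0) :
    ∃ ψ : ℂ → ℂ, AnalyticAt ℂ ψ z₀ ∧ ∀ᶠ z in 𝓝 z₀, ψ z ^ n = q z := by
  obtain ⟨L, hL, hexp⟩ := hq.exists_exp_eq hq₀
  refine ⟨fun z => exp (L z / n), (hL.div_const).cexp, ?_⟩
  filter_upwards [hexp] with z hz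
  rw [← exp_nat_mul, mul_div_cancel₀ _ (Nat.cast_ne_zero.mpr hn), hz]

theorem AnalyticAt.exists_norm_eq_rpow (hq : AnalyticAt ℂ q z₀) (hq₀ : q z₀ ≠ 0) (s : ℝ) :
    ∃ k : ℂ → ℂ, AnalyticAt ℂ k z₀ ∧ ∀ᶠ z in 𝓝 z₀, ‖k z‖ = ‖q z‖ ^ s := by
  obtain ⟨L, hL, hexp⟩ := hq.exists_exp_eq hq₀
  refine ⟨fun z => exp (s * L z), (analyticAt_const.mul hL).cexp, ?_⟩
  filter_upwards [hexp] with z hz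
  rw [← hz, norm_exp, norm_exp, ← Real.exp_mul, re_ofReal_mul, mul_comm]

theorem AnalyticAt.exists_sub_eq_mul_of_deriv_ne_zero (hq : AnalyticAt ℂ q z₀)
    (hd : deriv q z₀ ≠ 0) : ∃ φ : ℂ → ℂ, AnalyticAt ℂ φ z₀ ∧ φ z₀ ≠ 0 ∧
      ∀ᶠ z in 𝓝 z₀, q z - q z₀ = (z - z₀) * φ z := by
  have horder := hq.analyticOrderAt_sub_eq_one_of_deriv_ne_zero hd
  obtain ⟨φ, hφ, hφ₀, hqφ⟩ :=
    (analyticOrderAt_eq_natCast (n := 1) (hq.sub analyticAt_const)).mp (by exact_mod_cast horder)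
  exact ⟨φ, hφ, hφ₀, by simpa using hqφ⟩

end

theorem not_injOn_pow_of_mem_nhds_zero {t : Set ℂ} (ht : t ∈ 𝓝 0) {n : ℕ} (hn : 2 ≤ n) :
    ¬InjOn (· ^ n) t := by
  intro hinj
  obtain ⟨ε, hε, hball⟩ := Metric.mem_nhds_iff.mp ht
  have hζ := isPrimitiveRoot_exp n (by omega)
  set ζ := exp (2 * Real.pi * I / n)
  have hv : ((ε / 2 : ℝ) : ℂ) ∈ Metric.ball 0 ε := by
    rw [mem_ball_zero_iff, norm_real, Real.norm_of_nonneg (by positivity)]; linarith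
  have hζv : ζ * ((ε / 2 : ℝ) : ℂ) ∈ Metric.ball 0 ε := by
    rwa [mem_ball_zero_iff, norm_mul, hζ.norm'_eq_one (by omega), one_mul, ← mem_ball_zero_iff]
  have h := hinj (hball hζv) (hball hv) (by simp only [mul_pow, hζ.pow_eq_one, one_mul])
  exact hζ.ne_one (by omega) (mul_right_cancel₀ (by simp [hε.ne']) (h.trans (one_mul _).symm))

theorem AnalyticAt.not_injOn_pow {F : ℂ → ℂ} {z₀ : ℂ} (hF : AnalyticAt ℂ F z₀) (hF₀ : F z₀ = 0)
    (hd : deriv F z₀ ≠ 0) {t : Set ℂ} (ht : t ∈ 𝓝 z₀) {n : ℕ} (hn : 2 ≤ n) :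
    ¬InjOn (fun z => F z ^ n) t := by
  intro hinj
  have hmap : map F (𝓝 z₀) = 𝓝 0 := hF₀ ▸ hF.hasStrictDerivAt.map_nhds_eq hd
  exact not_injOn_pow_of_mem_nhds_zero (hmap ▸ image_mem_map ht) hn hinj.image_of_comp

/- If `w'` vanishes at `z₀`, then `w - w z₀ = F ^ n` near `z₀` with `n ≥ 2` and `F` a local
coordinate, so `w` is `n`-to-one there. -/
theorem AnalyticAt.deriv_ne_zero_of_injOn {w : ℂ → ℂ} {z₀ : ℂ} (hw : AnalyticAt ℂ w z₀)
    {t : Set ℂ} (ht : t ∈ 𝓝 z₀) (hinj : InjOn w t) : deriv w z₀ ≠ 0 := by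
  intro hd
  have horder : 2 ≤ analyticOrderAt (w · - w z₀) z₀ := by
    rw [← hw.analyticOrderAt_deriv_add_one, show (2 : ℕ∞) = 1 + 1 from rfl]
    gcongr
    exact Order.one_le_iff_ne_zero.mpr fun h0 =>
      (analyticOrderAt_eq_zero.mp h0).elim (· hw.deriv) (· hd)
  cases hn : analyticOrderAt (w · - w z₀) z₀ with
  | top =>
    have hconst : ∀ᶠ z in 𝓝[≠] z₀, z ∈ t ∧ w z - w z₀ = 0 :=
      nhdsWithin_le_nhds ((show ∀ᶠ z in 𝓝 z₀, z ∈ t from ht).and (analyticOrderAt_eq_top.mp hn))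
    obtain ⟨z, ⟨hzt, hwz⟩, hz⟩ := (hconst.and self_mem_nhdsWithin).exists
    exact hz (hinj hzt (mem_of_mem_nhds ht) (sub_eq_zero.mp hwz))
  | coe n =>
    rw [hn] at horder
    have hn0 : n ≠ 0 := by rintro rfl; simp at horder
    obtain ⟨φ, hφ, hφ₀, hwφ⟩ := (analyticOrderAt_eq_natCast (hw.sub analyticAt_const)).mp hn
    obtain ⟨ψ, hψ, hψφ⟩ := hφ.exists_pow_eq hφ₀ hn0
    have hψ₀ : ψ z₀ ≠ 0 := fun h => hφ₀ (by rw [← hψφ.self_of_nhds, h, zero_pow hn0])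
    set F : ℂ → ℂ := fun z => (z - z₀) * ψ z
    have hF : AnalyticAt ℂ F z₀ := (analyticAt_id.sub analyticAt_const).mul hψ
    have hdF : deriv F z₀ = ψ z₀ := by
      rw [deriv_fun_mul (by fun_prop) hψ.differentiableAt]; simp
    refine hF.not_injOn_pow (by simp [F]) (hdF ▸ hψ₀) (inter_mem ht (hwφ.and hψφ))
      (by exact_mod_cast horder) fun z₁ hz₁ z₂ hz₂ h => hinj hz₁.1 hz₂.1 ?_
    obtain ⟨-, e₁, f₁⟩ := hz₁
    obtain ⟨-, e₂, f₂⟩ := hz₂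
    simp only [Pi.sub_apply, smul_eq_mul] at e₁ e₂
    simp only [F, mul_pow] at h
    linear_combination e₁ - e₂ - (z₁ - z₀) ^ n * f₁ + (z₂ - z₀) ^ n * f₂ + h

theorem AnalyticAt.exists_norm_rpow_mul_norm_deriv_eq {w₁ w₂ : ℂ → ℂ} {z₀ : ℂ}
    (hw₁ : AnalyticAt ℂ w₁ z₀) (hw₂ : AnalyticAt ℂ w₂ z₀) (h₁ : w₁ z₀ = 0) (h₂ : w₂ z₀ = 0)
    (hd₁ : deriv w₁ z₀ ≠ 0) (hd₂ : deriv w₂ z₀ ≠ 0) (s : ℝ) :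
    ∃ h : ℂ → ℂ, AnalyticAt ℂ h z₀ ∧ ∀ᶠ z in 𝓝 z₀,
      ‖w₂ z‖ ^ s * ‖deriv w₂ z‖ = ‖h z‖ * (‖w₁ z‖ ^ s * ‖deriv w₁ z‖) := by
  obtain ⟨φ₁, hφ₁, hφ₁₀, hwφ₁⟩ := hw₁.exists_sub_eq_mul_of_deriv_ne_zero hd₁
  obtain ⟨φ₂, hφ₂, hφ₂₀, hwφ₂⟩ := hw₂.exists_sub_eq_mul_of_deriv_ne_zero hd₂
  obtain ⟨k, hk, hnorm⟩ := (hφ₂.div hφ₁ hφ₁₀).exists_norm_eq_rpow (div_ne_zero hφ₂₀ hφ₁₀) s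
  refine ⟨fun z => k z * (deriv w₂ z / deriv w₁ z), hk.mul (hw₂.deriv.div hw₁.deriv hd₁), ?_⟩
  filter_upwards [hwφ₁, hwφ₂, hnorm, hφ₁.continuousAt.eventually_ne hφ₁₀,
    hw₁.deriv.continuousAt.eventually_ne hd₁] with z e₁ e₂ hkz hφ₁z hd₁z
  rw [h₁, sub_zero] at e₁
  rw [h₂, sub_zero] at e₂
  have hw : w₂ z = w₁ z * (φ₂ z / φ₁ z) := by rw [e₁, e₂]; field_simp
  rw [hw, norm_mul, Real.mul_rpow (norm_nonneg _) (norm_nonneg _), norm_mul, hkz, Pi.div_apply,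
    norm_div, norm_div]
  field_simp [norm_ne_zero_iff.mpr hd₁z]

theorem ChartedSpace.nhdsNE_neBot {H X : Type*} [TopologicalSpace H] [TopologicalSpace X]
    [ChartedSpace H X] [∀ z : H, (𝓝[≠] z).NeBot] (x : X) : (𝓝[≠] x).NeBot := by
  set e := chartAt H x
  have hx : e x ∈ e.target := e.map_source (mem_chart_source H x)
  have hsymm : Tendsto e.symm (𝓝[≠] (e x)) (𝓝[≠] x) := by
    refine tendsto_nhdsWithin_iff.mpr ⟨?_, ?_⟩
    · simpa only [e.left_inv (mem_chart_source H x)] using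
        (e.continuousAt_symm hx).tendsto.mono_left nhdsWithin_le_nhds
    · filter_upwards [nhdsWithin_le_nhds (e.open_target.mem_nhds hx), self_mem_nhdsWithin]
        with z hz hne hzx
      exact hne (by rw [← e.right_inv hz, mem_singleton_iff.mp hzx]; rfl)
  exact hsymm.neBot

theorem ChartedSpace.dense_compl_finset {H X : Type*} [TopologicalSpace H] [TopologicalSpace X]
    [ChartedSpace H X] [T1Space H] [∀ z : H, (𝓝[≠] z).NeBot] (P : Finset X) :
    Dense (P : Set X)ᶜ := by
  have := ChartedSpace.t1Space H X
  have := ChartedSpace.nhdsNE_neBot (H := H) (X := X)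
  simpa [compl_eq_univ_sdiff] using dense_univ.sdiff_finset P

theorem Continuous.apply_eq_of_isLocalMax_eventually_eq {X α : Type*} [TopologicalSpace X]
    [CompactSpace X] [PreconnectedSpace X] [LinearOrder α] [TopologicalSpace α]
    [OrderClosedTopology α] {f : X → α} (hf : Continuous f)
    (hmax : ∀ x, IsLocalMax f x → ∀ᶠ y in 𝓝 x, f y = f x) (x y : X) : f x = f y := by
  have : Nonempty X := ⟨x⟩
  obtain ⟨m, -, hm⟩ := isCompact_univ.exists_isMaxOn univ_nonempty hf.continuousOn
  have hS : IsClopen {y | f y = f m} := by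
    refine ⟨isClosed_eq hf continuous_const, isOpen_iff_mem_nhds.mpr fun y hy => ?_⟩
    have hy' : IsLocalMax f y := Eventually.of_forall fun z => (hm (mem_univ z)).trans hy.ge
    filter_upwards [hmax y hy'] with z hz using hz.trans hy
  have hSx : ∀ z, f z = f m := eq_univ_iff_forall.mp (hS.eq_univ ⟨m, rfl⟩)
  exact (hSx x).trans (hSx y).symm

def IsLocallyNormAnalyticWithin (s : Set M) (u : M → ℝ) : Prop :=
  ∀ x : M, ∃ h : ℂ → ℂ, AnalyticAt ℂ h (chartAt ℂ x x) ∧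
    ∀ᶠ m in 𝓝[s] x, u m = ‖h (chartAt ℂ x m)‖

theorem eventually_limUnder_nhdsWithin_eq_norm {s : Set M} (hs : Dense s) {u : M → ℝ} {x : M}
    {h : ℂ → ℂ} (hh : AnalyticAt ℂ h (chartAt ℂ x x))
    (hu : ∀ᶠ m in 𝓝[s] x, u m = ‖h (chartAt ℂ x m)‖) :
    ∀ᶠ m in 𝓝 x, limUnder (𝓝[s] m) u = ‖h (chartAt ℂ x m)‖ := by
  set e := chartAt ℂ x
  have hcont : ∀ᶠ m in 𝓝 x, ContinuousAt (fun m => ‖h (e m)‖) m := by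
    filter_upwards [chart_source_mem_nhds ℂ x,
      (e.eventually_nhds _ (mem_chart_source ℂ x)).mp hh.eventually_analyticAt] with m hm hhm
    exact (hhm.continuousAt.comp (e.continuousAt hm)).norm
  rw [eventually_nhdsWithin_iff] at hu
  filter_upwards [hcont, eventually_eventually_nhds.mpr hu] with m hcm hum
  have := mem_closure_iff_nhdsWithin_neBot.mp (hs m)
  refine ((hcm.tendsto.mono_left nhdsWithin_le_nhds).congr' ?_).limUnder_eq
  exact (eventually_nhdsWithin_iff.mpr hum).mono fun _ h => h.symm

namespace IsLocallyNormAnalyticWithin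

variable {s : Set M} {u : M → ℝ}

theorem exists_extension (hu : IsLocallyNormAnalyticWithin s u) (hs : Dense s) :
    ∃ U : M → ℝ, IsLocallyNormAnalyticWithin univ U ∧ EqOn U u s := by
  refine ⟨fun m => limUnder (𝓝[s] m) u, fun x => ?_, fun m hm => ?_⟩
  · obtain ⟨h, hh, hev⟩ := hu x
    exact ⟨h, hh, nhdsWithin_univ x ▸ eventually_limUnder_nhdsWithin_eq_norm hs hh hev⟩
  · obtain ⟨h, hh, hev⟩ := hu m
    exact (eventually_limUnder_nhdsWithin_eq_norm hs hh hev).self_of_nhds.trans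
      (hev.self_of_nhdsWithin hm).symm

theorem continuous (hu : IsLocallyNormAnalyticWithin univ u) : Continuous u :=
  continuous_iff_continuousAt.mpr fun x => by
    obtain ⟨h, hh, hev⟩ := hu x
    rw [nhdsWithin_univ] at hev
    exact (hh.continuousAt.comp ((chartAt ℂ x).continuousAt (mem_chart_source ℂ x))).norm.congr
      (hev.mono fun _ h => h.symm)

theorem eventually_eq_of_isLocalMax (hu : IsLocallyNormAnalyticWithin univ u) {x : M}
    (hx : IsLocalMax u x) : ∀ᶠ y in 𝓝 x, u y = u x := by
  obtain ⟨h, hh, hev⟩ := hu x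
  rw [nhdsWithin_univ] at hev
  set e := chartAt ℂ x
  have hmax : IsLocalMax (norm ∘ h) (e x) := by
    refine (e.eventually_nhds _ (mem_chart_source ℂ x)).mpr ?_
    filter_upwards [hx, hev] with y hy hy'
    simpa only [Function.comp_apply, ← hy', ← hev.self_of_nhds] using hy
  have hconst := Complex.norm_eventually_eq_of_isLocalMax
    (hh.eventually_analyticAt.mono fun _ h => h.differentiableAt) hmax
  filter_upwards [hev, (e.eventually_nhds _ (mem_chart_source ℂ x)).mp hconst] with y hy hy'
  rw [hy, hy', hev.self_of_nhds]

theorem apply_eq (hu : IsLocallyNormAnalyticWithin univ u) [CompactSpace M] [PreconnectedSpace M]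
    (x y : M) : u x = u y :=
  hu.continuous.apply_eq_of_isLocalMax_eventually_eq (fun _ => hu.eventually_eq_of_isLocalMax) x y

end IsLocallyNormAnalyticWithin

theorem FlatAwayFrom.pos {ρ : M → ℂ → ℝ} {P : Set M} (hflat : FlatAwayFrom ρ P) {m : M}
    (hm : m ∉ P) : 0 < ρ m (chartAt ℂ m m) := by
  obtain ⟨r, hr, -, f, -, hf⟩ := hflat m hm
  obtain ⟨hf₀, hρ⟩ := hf _ (Metric.mem_ball_self hr)
  exact hρ ▸ norm_pos_iff.mpr hf₀

theorem MetricCompat.density_eq_mul_of_chartAt {ρ₁ ρ₂ : M → ℂ → ℝ} (hc₁ : MetricCompat ρ₁)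
    (hc₂ : MetricCompat ρ₂) {x m : M} (hm : m ∈ (chartAt ℂ x).source) {t : ℝ}
    (h : ρ₂ x (chartAt ℂ x m) = t * ρ₁ x (chartAt ℂ x m)) :
    ρ₂ m (chartAt ℂ m m) = t * ρ₁ m (chartAt ℂ m m) := by
  rw [hc₁ m x m (mem_chart_source ℂ m) hm, hc₂ m x m (mem_chart_source ℂ m) hm, h, mul_assoc]

theorem FlatAwayFrom.exists_analyticAt_density_eq {ρ₁ ρ₂ : M → ℂ → ℝ} {P : Set M}
    (hflat₁ : FlatAwayFrom ρ₁ P) (hflat₂ : FlatAwayFrom ρ₂ P) {x : M} (hx : x ∉ P) :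
    ∃ h : ℂ → ℂ, AnalyticAt ℂ h (chartAt ℂ x x) ∧
      ∀ᶠ z in 𝓝 (chartAt ℂ x x), ρ₂ x z = ‖h z‖ * ρ₁ x z := by
  obtain ⟨r₁, hr₁, -, f₁, hf₁, hρ₁⟩ := hflat₁ x hx
  obtain ⟨r₂, hr₂, -, f₂, hf₂, hρ₂⟩ := hflat₂ x hx
  have hf₁₀ := (hρ₁ _ (Metric.mem_ball_self hr₁)).1
  refine ⟨fun z => f₂ z / f₁ z, (hf₂.analyticAt (Metric.ball_mem_nhds _ hr₂)).div
    (hf₁.analyticAt (Metric.ball_mem_nhds _ hr₁)) hf₁₀, ?_⟩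
  filter_upwards [Metric.ball_mem_nhds _ hr₁, Metric.ball_mem_nhds _ hr₂] with z hz₁ hz₂
  obtain ⟨hf₁z, hρ₁z⟩ := hρ₁ z hz₁
  rw [hρ₁z, (hρ₂ z hz₂).2, norm_div, div_mul_cancel₀ _ (norm_ne_zero_iff.mpr hf₁z)]

theorem FiniteConeAt.exists_analyticAt_density_eq {ρ₁ ρ₂ : M → ℂ → ℝ} {p : M} {a : ℝ}
    (hcone₁ : FiniteConeAt ρ₁ p a) (hcone₂ : FiniteConeAt ρ₂ p a) :
    ∃ h : ℂ → ℂ, AnalyticAt ℂ h (chartAt ℂ p p) ∧ ∀ᶠ z in 𝓝 (chartAt ℂ p p),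
      z ≠ chartAt ℂ p p → ρ₂ p z = ‖h z‖ * ρ₁ p z := by
  obtain ⟨r₁, hr₁, -, w₁, hw₁, hinj₁, hw₁₀, hρ₁⟩ := hcone₁
  obtain ⟨r₂, hr₂, -, w₂, hw₂, hinj₂, hw₂₀, hρ₂⟩ := hcone₂
  have hw₁a := hw₁.analyticAt (Metric.ball_mem_nhds _ hr₁)
  have hw₂a := hw₂.analyticAt (Metric.ball_mem_nhds _ hr₂)
  obtain ⟨h, hh, hev⟩ := hw₁a.exists_norm_rpow_mul_norm_deriv_eq hw₂a hw₁₀ hw₂₀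
    (hw₁a.deriv_ne_zero_of_injOn (Metric.ball_mem_nhds _ hr₁) hinj₁)
    (hw₂a.deriv_ne_zero_of_injOn (Metric.ball_mem_nhds _ hr₂) hinj₂) (a - 1)
  refine ⟨h, hh, ?_⟩
  filter_upwards [hev, Metric.ball_mem_nhds _ hr₁, Metric.ball_mem_nhds _ hr₂] with z hz hz₁ hz₂ hne
  rw [hρ₁ z hz₁ hne, hρ₂ z hz₂ hne, hz]

theorem isLocallyNormAnalyticWithin_density_div {P : Set M} {a : M → ℝ} {ρ₁ ρ₂ : M → ℂ → ℝ}
    (hcompat₁ : MetricCompat ρ₁) (hcompat₂ : MetricCompat ρ₂)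
    (hflat₁ : FlatAwayFrom ρ₁ P) (hflat₂ : FlatAwayFrom ρ₂ P)
    (hcone₁ : ∀ p ∈ P, FiniteConeAt ρ₁ p (a p)) (hcone₂ : ∀ p ∈ P, FiniteConeAt ρ₂ p (a p)) :
    IsLocallyNormAnalyticWithin Pᶜ fun m => ρ₂ m (chartAt ℂ m m) / ρ₁ m (chartAt ℂ m m) := by
  intro x
  set e := chartAt ℂ x
  obtain ⟨h, hh, hev⟩ : ∃ h : ℂ → ℂ, AnalyticAt ℂ h (e x) ∧
      ∀ᶠ z in 𝓝 (e x), e.symm z ∉ P → ρ₂ x z = ‖h z‖ * ρ₁ x z := by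
    by_cases hx : x ∈ P
    · obtain ⟨h, hh, hev⟩ := (hcone₁ x hx).exists_analyticAt_density_eq (hcone₂ x hx)
      refine ⟨h, hh, hev.mono fun z hz hzP => hz ?_⟩
      rintro rfl
      exact hzP (by rwa [e.left_inv (mem_chart_source ℂ x)])
    · obtain ⟨h, hh, hev⟩ := hflat₁.exists_analyticAt_density_eq hflat₂ hx
      exact ⟨h, hh, hev.mono fun z hz _ => hz⟩
  refine ⟨h, hh, ?_⟩
  filter_upwards [nhdsWithin_le_nhds (chart_source_mem_nhds ℂ x),
    nhdsWithin_le_nhds (e.continuousAt (mem_chart_source ℂ x) hev), self_mem_nhdsWithin]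
    with m hm hρ hmP
  simp only [mem_preimage, mem_ofPred_eq, e.left_inv hm] at hρ
  rw [hcompat₁.density_eq_mul_of_chartAt hcompat₂ hm (hρ hmP), mul_div_assoc,
    div_self (hflat₁.pos hmP).ne', mul_one]

theorem stmt_16_general {M : Type*} [TopologicalSpace M] [ChartedSpace ℂ M]
    [CompactSpace M] [ConnectedSpace M]
    (P : Finset M) (a : M → ℝ) (ρ₁ ρ₂ : M → ℂ → ℝ)
    (hcompat₁ : MetricCompat ρ₁) (hcompat₂ : MetricCompat ρ₂)
    (hflat₁ : FlatAwayFrom ρ₁ (P : Set M)) (hflat₂ : FlatAwayFrom ρ₂ (P : Set M))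
    (hcone₁ : ∀ p ∈ P, FiniteConeAt ρ₁ p (a p))
    (hcone₂ : ∀ p ∈ P, FiniteConeAt ρ₂ p (a p)) :
    ∃ c : ℝ, 0 < c ∧ ∀ m : M, m ∉ P →
      ρ₂ m (chartAt ℂ m m) = c * ρ₁ m (chartAt ℂ m m) := by
  set u : M → ℝ := fun m => ρ₂ m (chartAt ℂ m m) / ρ₁ m (chartAt ℂ m m)
  have hP := ChartedSpace.dense_compl_finset (H := ℂ) P
  obtain ⟨U, hU, hUu⟩ := (isLocallyNormAnalyticWithin_density_div hcompat₁ hcompat₂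
    hflat₁ hflat₂ hcone₁ hcone₂).exists_extension hP
  obtain ⟨m₁, hm₁⟩ := hP.nonempty
  refine ⟨u m₁, div_pos (hflat₂.pos hm₁) (hflat₁.pos hm₁), fun m hm => ?_⟩
  have hum : u m = u m₁ := (hUu hm).symm.trans ((hU.apply_eq m m₁).trans (hUu hm₁))
  rw [← hum]
  exact (div_mul_cancel₀ _ (hflat₁.pos hm).ne').symm

/-- Two flat cone metrics on a compact Riemann surface with the same finite cone
points and the same (finite) cone angles differ by a constant positive scalar
factor. -/
theorem stmt_16 {M : Type*} [TopologicalSpace M] [ChartedSpace ℂ M] [T2Space M]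
    [IsManifold 𝓘(ℂ, ℂ) (⊤ : WithTop ℕ∞) M] [CompactSpace M] [ConnectedSpace M]
    (P : Finset M) (a : M → ℝ) (ρ₁ ρ₂ : M → ℂ → ℝ)
    (hcompat₁ : MetricCompat ρ₁) (hcompat₂ : MetricCompat ρ₂)
    (hflat₁ : FlatAwayFrom ρ₁ (P : Set M)) (hflat₂ : FlatAwayFrom ρ₂ (P : Set M))
    (hcone₁ : ∀ p ∈ P, FiniteConeAt ρ₁ p (a p))
    (hcone₂ : ∀ p ∈ P, FiniteConeAt ρ₂ p (a p)) :
    ∃ c : ℝ, 0 < c ∧ ∀ m : M, m ∉ P →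
      ρ₂ m (chartAt ℂ m m) = c * ρ₁ m (chartAt ℂ m m) :=
  stmt_16_general P a ρ₁ ρ₂ hcompat₁ hcompat₂ hflat₁ hflat₂ hcone₁ hcone₂
end
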